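/- Let k ∈ (−π, −π/2) with k ≠ −3π/4 and set ηⱼ = (2j−1)k. Then for all x ∈ ℝ and all t ∈ [0, 1), as L → ∞ over the positive integers: if α > 1/2 then Σ_{j=1}^{⌊Lt⌋} sin²(x − ηⱼ)/(L − j)^{2α} → 0 and Σ_{j=1}^{⌊Lt⌋} cos²(x − ηⱼ)/(L − j)^{2α} → 0, while if α = 1/2 then Σ_{j=1}^{⌊Lt⌋} sin²(x − ηⱼ)/(L − j) → −(1/2) log(1 − t) and Σ_{j=1}^{⌊Lt⌋} cos²(x − ηⱼ)/(L − j) → −(1/2) log(1 − t); note that −log(1 − t) = ∫₀ᵗ ds/(1 − s). -/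

import Mathlib

/-!
Doubling the angle, `sin²(x - ηⱼ)` and `cos²(x - ηⱼ)` are `(1 ∓ cos (a + 2 b j)) / 2` with
`a = 2x + 2k` and `b = -2k`, and `sin b ≠ 0` for `k ∈ (-π, -π/2)`. The partial sums of
`cos (a + 2 b j)` therefore telescope and stay bounded by `1 / |sin b|`, so by Abel summation the
oscillating part, weighted by the increasing weights `(L - j)^(-β)`, is `O((L (1 - t))^(-β))`.
What remains is half of `∑ (L - j)^(-β)`: for `β > 1` it is at most `L (L (1 - t))^(-β) → 0`, and
for `β = 1` it is the harmonic difference `H_{L-1} - H_{L-1-⌊Lt⌋} → -log (1 - t)`.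
-/

open Filter Real Finset Topology

lemma two_mul_sin_mul_sum_cos (a b : ℝ) (m : ℕ) :
    2 * sin b * ∑ j ∈ Icc 1 m, cos (a + 2 * b * j) = sin (a + (2 * m + 1) * b) - sin (a + b) := by
  induction m with
  | zero => simp
  | succ m ih =>
    have step := sin_sub_sin (a + (2 * (m + 1) + 1) * b) (a + (2 * m + 1) * b)
    rw [show (a + (2 * (m + 1) + 1) * b - (a + (2 * m + 1) * b)) / 2 = b by ring,
      show (a + (2 * (m + 1) + 1) * b + (a + (2 * m + 1) * b)) / 2 = a + 2 * b * (m + 1) by ring]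
      at step
    rw [sum_Icc_succ_top (by omega), mul_add, ih]
    push_cast
    linarith

lemma abs_sum_cos_le (a b : ℝ) (hb : sin b ≠ 0) (m : ℕ) :
    |∑ j ∈ Icc 1 m, cos (a + 2 * b * j)| ≤ 1 / |sin b| := by
  rw [le_div_iff₀ (abs_pos.2 hb), ← abs_mul, abs_le]
  have h := two_mul_sin_mul_sum_cos a b m
  constructor <;>
    linarith [neg_one_le_sin (a + (2 * m + 1) * b), sin_le_one (a + (2 * m + 1) * b),
      neg_one_le_sin (a + b), sin_le_one (a + b)]

section Abel

variable (c w : ℕ → ℝ) {C : ℝ} {n : ℕ}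

lemma abs_sum_Icc_mul_sub_le (hn : 1 ≤ n) (hc : ∀ m ≤ n, |∑ j ∈ Icc 1 m, c j| ≤ C)
    (hw : MonotoneOn w (Set.Icc 1 n)) :
    |∑ j ∈ Icc 1 n, c j * w j - (∑ j ∈ Icc 1 n, c j) * w n| ≤ C * (w n - w 1) := by
  induction n, hn using Nat.le_induction with
  | base => simp
  | succ n hn ih =>
    have ih := ih (fun m hm => hc m (by omega)) (hw.mono (Set.Icc_subset_Icc_right (by omega)))
    have hwn : w n ≤ w (n + 1) := hw ⟨hn, by omega⟩ ⟨by omega, le_rfl⟩ (by omega)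
    have hS := hc n (by omega)
    rw [sum_Icc_succ_top (by omega), sum_Icc_succ_top (by omega)]
    calc _ = |(∑ j ∈ Icc 1 n, c j * w j - (∑ j ∈ Icc 1 n, c j) * w n)
            - (∑ j ∈ Icc 1 n, c j) * (w (n + 1) - w n)| := by ring_nf
      _ ≤ C * (w n - w 1) + C * (w (n + 1) - w n) := by
        refine (abs_sub _ _).trans (add_le_add ih ?_)
        rw [abs_mul, abs_of_nonneg (sub_nonneg.2 hwn)]
        exact mul_le_mul_of_nonneg_right hS (sub_nonneg.2 hwn)
      _ = C * (w (n + 1) - w 1) := by ring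

lemma abs_sum_Icc_mul_le (hn : 1 ≤ n) (hc : ∀ m ≤ n, |∑ j ∈ Icc 1 m, c j| ≤ C)
    (hw : MonotoneOn w (Set.Icc 1 n)) (hw1 : 0 ≤ w 1) :
    |∑ j ∈ Icc 1 n, c j * w j| ≤ 2 * C * w n := by
  have hC : 0 ≤ C := (abs_nonneg _).trans (hc 0 (Nat.zero_le n))
  have hwn : w 1 ≤ w n := hw ⟨le_rfl, hn⟩ ⟨hn, le_rfl⟩ hn
  have herr := abs_sum_Icc_mul_sub_le c w hn hc hw
  have hlast : |(∑ j ∈ Icc 1 n, c j) * w n| ≤ C * w n := by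
    rw [abs_mul, abs_of_nonneg (hw1.trans hwn)]
    exact mul_le_mul_of_nonneg_right (hc n le_rfl) (hw1.trans hwn)
  have := abs_add_le (∑ j ∈ Icc 1 n, c j * w j - (∑ j ∈ Icc 1 n, c j) * w n)
    ((∑ j ∈ Icc 1 n, c j) * w n)
  rw [sub_add_cancel] at this
  linarith [mul_nonneg hC hw1]

end Abel

lemma mul_one_sub_le_sub_of_le_floor {L t : ℝ} (hL : 0 ≤ L) (ht : 0 ≤ t) {j : ℕ}
    (hj : j ≤ ⌊L * t⌋₊) : L * (1 - t) ≤ L - j := by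
  have := (Nat.cast_le (α := ℝ).2 hj).trans (Nat.floor_le (mul_nonneg hL ht))
  linarith

lemma tendsto_sum_div_rpow_of_abs_sum_le {t : ℝ} (ht0 : 0 ≤ t) (ht1 : t < 1) (c : ℕ → ℝ) {C β : ℝ}
    (hc : ∀ m, |∑ j ∈ Icc 1 m, c j| ≤ C) (hβ : 0 < β) :
    Tendsto (fun L : ℕ => ∑ j ∈ Icc 1 ⌊(L : ℝ) * t⌋₊, c j / ((L : ℝ) - j) ^ β) atTop (𝓝 0) := by
  have h1t : 0 < 1 - t := by linarith
  have hC : 0 ≤ C := (abs_nonneg _).trans (hc 0)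
  have hbound : Tendsto (fun L : ℕ => 2 * C * (((L : ℝ) * (1 - t)) ^ β)⁻¹) atTop (𝓝 0) := by
    simpa using ((tendsto_rpow_atTop hβ).comp
      (tendsto_natCast_atTop_atTop.atTop_mul_const h1t)).inv_tendsto_atTop.const_mul (2 * C)
  refine squeeze_zero_norm' ?_ hbound
  filter_upwards [eventually_gt_atTop 0] with L hL
  set n := ⌊(L : ℝ) * t⌋₊
  have hpos : 0 < (L : ℝ) * (1 - t) := by positivity
  have hgap : ∀ j ≤ n, (L : ℝ) * (1 - t) ≤ L - j :=
    fun j hj => mul_one_sub_le_sub_of_le_floor L.cast_nonneg ht0 hj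
  rcases Nat.eq_zero_or_pos n with hn | hn
  · simp only [hn, Icc_eq_empty_of_lt zero_lt_one, sum_empty, norm_zero]
    positivity
  have hw : MonotoneOn (fun j : ℕ => (((L : ℝ) - j) ^ β)⁻¹) (Set.Icc 1 n) := by
    intro i _ j hj hij
    have := hpos.trans_le (hgap j hj.2)
    dsimp only
    gcongr
  calc ‖∑ j ∈ Icc 1 n, c j / ((L : ℝ) - j) ^ β‖
      = |∑ j ∈ Icc 1 n, c j * (((L : ℝ) - j) ^ β)⁻¹| := by
        simp only [div_eq_mul_inv, Real.norm_eq_abs]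
    _ ≤ 2 * C * (((L : ℝ) - n) ^ β)⁻¹ :=
      abs_sum_Icc_mul_le c _ hn (fun m _ => hc m) hw
        (by have := hpos.trans_le (hgap 1 hn); positivity)
    _ ≤ 2 * C * (((L : ℝ) * (1 - t)) ^ β)⁻¹ := by gcongr; exact hgap n le_rfl

lemma tendsto_sum_one_div_rpow_of_one_lt {t : ℝ} (ht0 : 0 ≤ t) (ht1 : t < 1) {β : ℝ} (hβ : 1 < β) :
    Tendsto (fun L : ℕ => ∑ j ∈ Icc 1 ⌊(L : ℝ) * t⌋₊, 1 / ((L : ℝ) - j) ^ β) atTop (𝓝 0) := by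
  have h1t : 0 < 1 - t := by linarith
  have hbound : Tendsto (fun L : ℕ => (1 - t) ^ (-β) * (L : ℝ) ^ (-(β - 1))) atTop (𝓝 0) := by
    simpa using ((tendsto_rpow_neg_atTop (by linarith : 0 < β - 1)).comp
      tendsto_natCast_atTop_atTop).const_mul ((1 - t) ^ (-β))
  refine squeeze_zero_norm' ?_ hbound
  filter_upwards [eventually_gt_atTop 0] with L hL
  set n := ⌊(L : ℝ) * t⌋₊
  have hpos : 0 < (L : ℝ) * (1 - t) := by positivity
  have hterm : ∀ j ∈ Icc 1 n, 0 ≤ 1 / ((L : ℝ) - j) ^ β ∧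
      1 / ((L : ℝ) - j) ^ β ≤ ((L : ℝ) * (1 - t)) ^ (-β) := by
    intro j hj
    have hgap := mul_one_sub_le_sub_of_le_floor L.cast_nonneg ht0 (mem_Icc.1 hj).2
    have := hpos.trans_le hgap
    refine ⟨by positivity, ?_⟩
    rw [rpow_neg hpos.le, one_div]
    gcongr
  have hnL : (n : ℝ) ≤ L := by
    have := mul_one_sub_le_sub_of_le_floor L.cast_nonneg ht0 (le_refl n)
    nlinarith
  rw [Real.norm_of_nonneg (sum_nonneg fun j hj => (hterm j hj).1)]
  calc ∑ j ∈ Icc 1 n, 1 / ((L : ℝ) - j) ^ β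
      ≤ ∑ _j ∈ Icc 1 n, ((L : ℝ) * (1 - t)) ^ (-β) := sum_le_sum fun j hj => (hterm j hj).2
    _ = n * ((L : ℝ) * (1 - t)) ^ (-β) := by simp
    _ ≤ L * ((L : ℝ) * (1 - t)) ^ (-β) := by gcongr
    _ = (1 - t) ^ (-β) * (L : ℝ) ^ (-(β - 1)) := by
      rw [mul_rpow L.cast_nonneg h1t.le, show -(β - 1) = -β + 1 by ring,
        rpow_add_one (by positivity)]
      ring

lemma sum_Icc_one_div_natCast_sub (m n : ℕ) :
    ∑ j ∈ Icc 1 n, 1 / (((m + n + 1 : ℕ) : ℝ) - j) = harmonic (m + n) - harmonic m := by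
  induction n generalizing m with
  | zero => simp
  | succ n ih =>
    rw [sum_Icc_succ_top (by omega),
      show ((m + (n + 1) + 1 : ℕ) : ℝ) - (n + 1 : ℕ) = (m + 1 : ℕ) by push_cast; ring,
      show m + (n + 1) + 1 = m + 1 + n + 1 by ring, ih, show m + 1 + n = m + (n + 1) by ring,
      harmonic_succ m]
    push_cast
    ring

lemma tendsto_harmonic_sub_harmonic {ι : Type*} {l : Filter ι} {m M : ι → ℕ} {r : ℝ}
    (hr : 0 < r) (hM : Tendsto M l atTop)
    (hmM : Tendsto (fun i => ((m i : ℝ) + 1) / (M i + 1)) l (𝓝 r)) :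
    Tendsto (fun i => (harmonic (M i) : ℝ) - harmonic (m i)) l (𝓝 (-log r)) := by
  have hm : Tendsto m l atTop := by
    have hM1 : Tendsto (fun i => (M i : ℝ) + 1) l atTop :=
      tendsto_atTop_add_const_right _ 1 (tendsto_natCast_atTop_atTop.comp hM)
    have hm1 : Tendsto (fun i => (m i : ℝ) + 1) l atTop :=
      (hmM.pos_mul_atTop hr hM1).congr fun i => div_mul_cancel₀ _ (by positivity)
    exact tendsto_natCast_atTop_iff.1
      ((tendsto_atTop_add_const_right _ (-1) hm1).congr fun i => by ring)
  have hγ := tendsto_harmonic_sub_log_add_one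
  have := ((hγ.comp hM).sub (hγ.comp hm)).sub (hmM.log hr.ne')
  rw [sub_self, zero_sub] at this
  refine this.congr fun i => ?_
  simp only [Function.comp_apply]
  rw [log_div (by positivity) (by positivity)]
  ring

lemma tendsto_sum_one_div_sub {t : ℝ} (ht0 : 0 ≤ t) (ht1 : t < 1) :
    Tendsto (fun L : ℕ => ∑ j ∈ Icc 1 ⌊(L : ℝ) * t⌋₊, 1 / ((L : ℝ) - j)) atTop
      (𝓝 (-log (1 - t))) := by
  set n : ℕ → ℕ := fun L => ⌊(L : ℝ) * t⌋₊
  have hn : ∀ᶠ L in atTop, n L < L := by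
    filter_upwards [eventually_gt_atTop 0] with L hL
    exact (Nat.floor_lt (by positivity)).2 (by nlinarith [(Nat.cast_pos (α := ℝ)).2 hL])
  have hratio : Tendsto (fun L : ℕ => (((L - 1 - n L : ℕ) : ℝ) + 1) / (((L - 1 : ℕ) : ℝ) + 1))
      atTop (𝓝 (1 - t)) := by
    refine (tendsto_const_nhds.sub
      ((tendsto_nat_floor_mul_div_atTop ht0).comp tendsto_natCast_atTop_atTop)).congr' ?_
    filter_upwards [hn] with L hL
    have hL : (0 : ℝ) < L := by exact_mod_cast (Nat.zero_le _).trans_lt hL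
    have e1 : ((L - 1 - n L : ℕ) : ℝ) + 1 = L - n L := by
      rw [eq_sub_iff_add_eq]; norm_cast; omega
    have e2 : ((L - 1 : ℕ) : ℝ) + 1 = L := by norm_cast; omega
    simp only [Function.comp_apply, e1, e2, n, mul_comm t]
    field_simp
  refine (tendsto_harmonic_sub_harmonic (by linarith) (tendsto_sub_atTop_nat 1) hratio).congr' ?_
  filter_upwards [hn] with L hL
  have h := sum_Icc_one_div_natCast_sub (L - 1 - n L) (n L)
  rw [show L - 1 - n L + n L + 1 = L by omega, show L - 1 - n L + n L = L - 1 by omega] at h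
  exact h.symm

lemma tendsto_sum_div_of_eq_half_add {ι : Type*} {l : Filter ι} {s : ι → Finset ℕ}
    {d : ι → ℕ → ℝ} {c u : ℕ → ℝ} {A ε : ℝ} (hu : ∀ j, u j = (1 + ε * c j) / 2)
    (hmain : Tendsto (fun L => ∑ j ∈ s L, 1 / d L j) l (𝓝 A))
    (hosc : Tendsto (fun L => ∑ j ∈ s L, c j / d L j) l (𝓝 0)) :
    Tendsto (fun L => ∑ j ∈ s L, u j / d L j) l (𝓝 (A / 2)) := by
  have := (hmain.add (hosc.const_mul ε)).div_const 2
  rw [mul_zero, add_zero] at this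
  refine this.congr fun L => ?_
  rw [mul_sum, ← sum_add_distrib, sum_div]
  refine sum_congr rfl fun j _ => ?_
  rw [hu]
  ring

theorem trig_sums_decaying_second_order_general (k : ℝ) (hk1 : -π < k) (hk2 : k < -(π / 2))
    (x t : ℝ) (ht0 : 0 ≤ t) (ht1 : t < 1) :
    (∀ α : ℝ, 1 / 2 < α →
      Tendsto (fun L : ℕ => ∑ j ∈ Finset.Icc 1 ⌊(L : ℝ) * t⌋₊,
          Real.sin (x - (2 * (j : ℝ) - 1) * k) ^ 2 / ((L : ℝ) - (j : ℝ)) ^ (2 * α))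
        atTop (nhds 0) ∧
      Tendsto (fun L : ℕ => ∑ j ∈ Finset.Icc 1 ⌊(L : ℝ) * t⌋₊,
          Real.cos (x - (2 * (j : ℝ) - 1) * k) ^ 2 / ((L : ℝ) - (j : ℝ)) ^ (2 * α))
        atTop (nhds 0)) ∧
    (Tendsto (fun L : ℕ => ∑ j ∈ Finset.Icc 1 ⌊(L : ℝ) * t⌋₊,
        Real.sin (x - (2 * (j : ℝ) - 1) * k) ^ 2 / ((L : ℝ) - (j : ℝ)))
      atTop (nhds (-(1 / 2) * Real.log (1 - t))) ∧
    Tendsto (fun L : ℕ => ∑ j ∈ Finset.Icc 1 ⌊(L : ℝ) * t⌋₊,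
        Real.cos (x - (2 * (j : ℝ) - 1) * k) ^ 2 / ((L : ℝ) - (j : ℝ)))
      atTop (nhds (-(1 / 2) * Real.log (1 - t)))) := by
  have hb : sin (-(2 * k)) ≠ 0 := by
    rw [sin_neg, neg_ne_zero, ← sin_add_two_pi]
    exact (sin_pos_of_pos_of_lt_pi (by linarith) (by linarith)).ne'
  set c : ℕ → ℝ := fun j => cos (2 * x + 2 * k + 2 * -(2 * k) * j)
  have hosc {β : ℝ} (hβ : 0 < β) :=
    tendsto_sum_div_rpow_of_abs_sum_le ht0 ht1 c (abs_sum_cos_le _ _ hb) hβ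
  have hdouble (j : ℕ) : 2 * (x - (2 * (j : ℝ) - 1) * k) = 2 * x + 2 * k + 2 * -(2 * k) * j := by
    ring
  have hsin (j : ℕ) : sin (x - (2 * (j : ℝ) - 1) * k) ^ 2 = (1 + -1 * c j) / 2 := by
    rw [sin_sq, cos_sq, hdouble]; ring
  have hcos (j : ℕ) : cos (x - (2 * (j : ℝ) - 1) * k) ^ 2 = (1 + 1 * c j) / 2 := by
    rw [cos_sq, hdouble]; ring
  have hlog : -(1 / 2) * log (1 - t) = -log (1 - t) / 2 := by ring
  have hmain {α : ℝ} (hα : 1 / 2 < α) :=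
    tendsto_sum_one_div_rpow_of_one_lt ht0 ht1 (by linarith : 1 < 2 * α)
  have hharm := tendsto_sum_one_div_sub ht0 ht1
  have hosc₁ : Tendsto (fun L : ℕ => ∑ j ∈ Icc 1 ⌊(L : ℝ) * t⌋₊, c j / ((L : ℝ) - j))
      atTop (𝓝 0) := by
    simpa only [rpow_one] using hosc one_pos
  refine ⟨fun α hα => ⟨?_, ?_⟩, ?_, ?_⟩
  · simpa only [zero_div] using
      tendsto_sum_div_of_eq_half_add hsin (hmain hα) (hosc (by linarith))
  · simpa only [zero_div] using
      tendsto_sum_div_of_eq_half_add hcos (hmain hα) (hosc (by linarith))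
  · rw [hlog]; exact tendsto_sum_div_of_eq_half_add hsin hharm hosc₁
  · rw [hlog]; exact tendsto_sum_div_of_eq_half_add hcos hharm hosc₁

/-- for `k ∈ (−π, −π/2)`, `k ≠ −3π/4`, `ηⱼ = (2j−1)k`, all `x ∈ ℝ` and
`t ∈ [0,1)`: if `α > 1/2` then `Σ_{j=1}^{⌊Lt⌋} sin²(x − ηⱼ)/(L − j)^{2α} → 0` and
likewise for `cos²`; if `α = 1/2` then `Σ_{j=1}^{⌊Lt⌋} sin²(x − ηⱼ)/(L − j) → −(1/2) log(1 − t)`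
and likewise for `cos²` (note `−log(1−t) = ∫₀ᵗ ds/(1−s)`). -/
theorem trig_sums_decaying_second_order (k : ℝ) (hk1 : -π < k) (hk2 : k < -(π / 2))
    (hk3 : k ≠ -(3 * π / 4)) (x t : ℝ) (ht0 : 0 ≤ t) (ht1 : t < 1) :
    (∀ α : ℝ, 1 / 2 < α →
      Tendsto (fun L : ℕ => ∑ j ∈ Finset.Icc 1 ⌊(L : ℝ) * t⌋₊,
          Real.sin (x - (2 * (j : ℝ) - 1) * k) ^ 2 / ((L : ℝ) - (j : ℝ)) ^ (2 * α))
        atTop (nhds 0) ∧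
      Tendsto (fun L : ℕ => ∑ j ∈ Finset.Icc 1 ⌊(L : ℝ) * t⌋₊,
          Real.cos (x - (2 * (j : ℝ) - 1) * k) ^ 2 / ((L : ℝ) - (j : ℝ)) ^ (2 * α))
        atTop (nhds 0)) ∧
    (Tendsto (fun L : ℕ => ∑ j ∈ Finset.Icc 1 ⌊(L : ℝ) * t⌋₊,
        Real.sin (x - (2 * (j : ℝ) - 1) * k) ^ 2 / ((L : ℝ) - (j : ℝ)))
      atTop (nhds (-(1 / 2) * Real.log (1 - t))) ∧
    Tendsto (fun L : ℕ => ∑ j ∈ Finset.Icc 1 ⌊(L : ℝ) * t⌋₊,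
        Real.cos (x - (2 * (j : ℝ) - 1) * k) ^ 2 / ((L : ℝ) - (j : ℝ)))
      atTop (nhds (-(1 / 2) * Real.log (1 - t)))) :=
  trig_sums_decaying_second_order_general k hk1 hk2 x t ht0 ht1
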